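/- arXiv:2207.04522 — 2 statements merged into one kernel-verified Lean document; each statement's English description precedes it below -/
import Mathlib

section
/- Let W be a balanced tetrahedral erasure channel with H(W) ≥ 2/3. Then H(W^p) ≥ 11/27; in particular H(W^p) ≥ 1/3, so the entropy of the parallel child cannot jump below 1/3 when the parent's entropy exceeds 2/3. -/
noncomputable section

/-- A quintuple of reals representing a candidate tetrahedral erasure channel
`W = (p, q, r, s, t)`. -/
structure TECQuint where
  p : ℝ
  q : ℝ
  r : ℝ
  s : ℝ
  t : ℝ

namespace TECQuint

/-- `W` is a tetrahedral erasure channel: all five entries are nonnegative and sum to 1. -/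
def IsTEC (W : TECQuint) : Prop :=
  0 ≤ W.p ∧ 0 ≤ W.q ∧ 0 ≤ W.r ∧ 0 ≤ W.s ∧ 0 ≤ W.t ∧
    W.p + W.q + W.r + W.s + W.t = 1

/-- `W` is balanced: `q = r = s`. -/
def Balanced (W : TECQuint) : Prop := W.q = W.r ∧ W.r = W.s

/-- The serial child `W^s`. -/
def ser (W : TECQuint) : TECQuint where
  p := W.p ^ 2
  q := W.p * W.s + W.s * W.q + W.q * W.p
  r := W.p * W.q + W.q * W.r + W.r * W.p
  s := W.p * W.r + W.r * W.s + W.s * W.p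
  t := 1 - (W.p ^ 2 + (W.p * W.s + W.s * W.q + W.q * W.p)
      + (W.p * W.q + W.q * W.r + W.r * W.p)
      + (W.p * W.r + W.r * W.s + W.s * W.p))

/-- The parallel child `W^p`. -/
def par (W : TECQuint) : TECQuint where
  p := 1 - ((W.t * W.s + W.s * W.q + W.q * W.t)
      + (W.t * W.q + W.q * W.r + W.r * W.t)
      + (W.t * W.r + W.r * W.s + W.s * W.t) + W.t ^ 2)
  q := W.t * W.s + W.s * W.q + W.q * W.t
  r := W.t * W.q + W.q * W.r + W.r * W.t
  s := W.t * W.r + W.r * W.s + W.s * W.t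
  t := W.t ^ 2

/-- The moment of inertia `A(W) = (q−r)² + (r−s)² + (s−q)²`. -/
def inertia (W : TECQuint) : ℝ :=
  (W.q - W.r) ^ 2 + (W.r - W.s) ^ 2 + (W.s - W.q) ^ 2

/-- The (conditional) entropy `H(W) = (q+r+s)/2 + t`. -/
def entropy (W : TECQuint) : ℝ := (W.q + W.r + W.s) / 2 + W.t

/-- The edge mass `E(W) = q + r + s`. -/
def edgeMass (W : TECQuint) : ℝ := W.q + W.r + W.s

/-- The Quetelet index `Q(W) = E(W) / (H(W)(1−H(W)))`. -/
def quetelet (W : TECQuint) : ℝ :=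
  edgeMass W / (entropy W * (1 - entropy W))

/-- One step of the channel process: `true` picks the serial child, `false` the parallel child. -/
def child (W : TECQuint) (b : Bool) : TECQuint := if b then ser W else par W

/-- The descendant `W^c` of `W` along the string `c ∈ {s,p}^n`. -/
def descend : TECQuint → {n : ℕ} → (Fin n → Bool) → TECQuint
  | W, 0, _ => W
  | W, _ + 1, c => descend (child W (c 0)) (fun i => c i.succ)

end TECQuint

open TECQuint

/-! For balanced `W` the parallel child has entropy `H² − E²/12` (with `H = H(W)`, `E = E(W)`),
which is smallest when the edge mass is as large as `E ≤ 2(1 − H)` allows. There it equals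
`(2H² + 2H − 1)/3`, and `(2H² + 2H − 1)/3 − 11/27 = 2(3H − 2)(3H + 5)/27 ≥ 0` once `H ≥ 2/3`. -/

namespace TECQuint

variable {W : TECQuint}

lemma edgeMass_nonneg (hW : W.IsTEC) : 0 ≤ edgeMass W := by
  obtain ⟨-, hq, hr, hs, -, -⟩ := hW
  unfold edgeMass
  positivity

lemma edgeMass_le_two_mul_one_sub_entropy (hW : W.IsTEC) :
    edgeMass W ≤ 2 * (1 - entropy W) := by
  obtain ⟨hp, -, -, -, -, hsum⟩ := hW
  unfold edgeMass entropy
  linarith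

lemma Balanced.entropy_par (hbal : W.Balanced) :
    entropy (par W) = entropy W ^ 2 - edgeMass W ^ 2 / 12 := by
  obtain ⟨hqr, hrs⟩ := hbal
  simp only [entropy, edgeMass, par, ← hrs, ← hqr]
  ring

end TECQuint

lemma le_sq_sub_sq_div_twelve {x y : ℝ} (hx : 2 / 3 ≤ x) (hy : 0 ≤ y) (hyx : y ≤ 2 * (1 - x)) :
    11 / 27 ≤ x ^ 2 - y ^ 2 / 12 := by
  have hy_sq : y ^ 2 ≤ (2 * (1 - x)) ^ 2 := pow_le_pow_left₀ hy hyx 2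
  nlinarith [mul_nonneg (sub_nonneg.2 hx) (by linarith : (0 : ℝ) ≤ 3 * x + 5)]

theorem parallel_entropy_no_jump (W : TECQuint) (hW : W.IsTEC) (hbal : W.Balanced)
    (hH : 2 / 3 ≤ entropy W) :
    11 / 27 ≤ entropy (par W) ∧ 1 / 3 ≤ entropy (par W) := by
  have h : 11 / 27 ≤ entropy (par W) := hbal.entropy_par ▸
    le_sq_sub_sq_div_twelve hH (edgeMass_nonneg hW) (edgeMass_le_two_mul_one_sub_entropy hW)
  exact ⟨h, by linarith⟩
end
end

section
/- For every tetrahedral erasure channel W, both children W^s and W^p are again tetrahedral erasure channels (all five entries are nonnegative and sum to 1); moreover, if W is balanced then both W^s and W^p are balanced. -/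
/-!
The serial child of `W` only consists of products of nonnegative entries, except for its erasure
entry, which is `1 - (p + q + r + s)² + (q² + r² + s² + qr + rs + sq) ≥ 0`; it sums to one by
construction and turns `q = r = s` into equal middle entries. Exchanging `p` and `t` preserves
both properties and conjugates the serial child into the parallel one.
-/

noncomputable section

open TECQuint

namespace TECQuint

attribute [ext] TECQuint

def dual (W : TECQuint) : TECQuint := ⟨W.t, W.q, W.r, W.s, W.p⟩

theorem IsTEC.dual {W : TECQuint} (hW : W.IsTEC) : W.dual.IsTEC := by
  obtain ⟨hp, hq, hr, hs, ht, hsum⟩ := hW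
  exact ⟨ht, hq, hr, hs, hp, by simp only [TECQuint.dual]; linarith⟩

theorem Balanced.dual {W : TECQuint} (hW : W.Balanced) : W.dual.Balanced := hW

theorem par_eq_dual_ser_dual (W : TECQuint) : par W = (ser W.dual).dual := by
  ext <;> simp only [par, ser, TECQuint.dual]
  ring

theorem ser_t_eq (W : TECQuint) :
    (ser W).t = 1 - (W.p + W.q + W.r + W.s) ^ 2
      + (W.q ^ 2 + W.r ^ 2 + W.s ^ 2 + W.q * W.r + W.r * W.s + W.s * W.q) := by
  simp only [ser]
  ring

theorem ser_t_nonneg {W : TECQuint} (hW : W.IsTEC) : 0 ≤ (ser W).t := by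
  obtain ⟨hp, hq, hr, hs, ht, hsum⟩ := hW
  have hmass : (W.p + W.q + W.r + W.s) ^ 2 ≤ 1 := pow_le_one₀ (by positivity) (by linarith)
  have hrest : 0 ≤ W.q ^ 2 + W.r ^ 2 + W.s ^ 2 + W.q * W.r + W.r * W.s + W.s * W.q := by
    positivity
  rw [ser_t_eq]
  linarith

theorem IsTEC.ser {W : TECQuint} (hW : W.IsTEC) : (ser W).IsTEC := by
  have ht := ser_t_nonneg hW
  obtain ⟨hp, hq, hr, hs, -, -⟩ := hW
  simp only [IsTEC, TECQuint.ser] at ht ⊢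
  exact ⟨by positivity, by positivity, by positivity, by positivity, ht, by ring⟩

theorem Balanced.ser {W : TECQuint} (hW : W.Balanced) : (ser W).Balanced := by
  obtain ⟨hqr, hrs⟩ := hW
  constructor <;> simp only [TECQuint.ser, hqr, hrs]

end TECQuint

theorem children_are_TECs (W : TECQuint) (hW : W.IsTEC) :
    IsTEC (ser W) ∧ IsTEC (par W) ∧
      (W.Balanced → Balanced (ser W) ∧ Balanced (par W)) := by
  rw [par_eq_dual_ser_dual]
  exact ⟨hW.ser, hW.dual.ser.dual, fun hB => ⟨hB.ser, hB.dual.ser.dual⟩⟩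
end
end
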